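/- arXiv:2004.14866 — 3 statements merged into one kernel-verified Lean document; each statement's English description precedes it below -/
import Mathlib

section
/- Let ξ, η ≥ 1, and suppose (1/ξ)·A ⪯ G ⪯ η·A. Then for any vector u ∈ ℝ^n and any τ ∈ [0,1], the updated matrix satisfies (1/ξ)·A ⪯ Broyd_τ(A, G, u) ⪯ η·A. In particular, Broyd_τ(A, G, u) is positive definite. -/
/-!
The update `broyd τ A G u` is the convex combination `φ_τ • DFP + (1 - φ_τ) • BFGS` with
`φ_τ ∈ [0, 1]`, and both Loewner bounds are stable under convex combinations, so it suffices to
treat the two extreme updates. Splitting `x = y + (⟨Au,x⟩/⟨Au,u⟩) u` with `y` `A`-orthogonal to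
`u` gives `⟨Ax,x⟩ = ⟨Ay,y⟩ + ⟨Au,x⟩²/⟨Au,u⟩` and `⟨DFP x,x⟩ = ⟨Gy,y⟩ + ⟨Au,x⟩²/⟨Au,u⟩`, so
the bounds pass from `G` to DFP term by term, using `ξ⁻¹ ≤ 1 ≤ η`. BFGS differs from DFP by the
negative semidefinite rank-one term `-⟨Gu,u⟩ vvᵀ`, `v = Gu/⟨Gu,u⟩ - Au/⟨Au,u⟩`, which gives its
upper bound; its lower bound comes from the same splitting with the `G`-orthogonal projection.
-/

open Matrix Finset

/-- The Broyden family update of a Hessian approximation `G` with respect to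
the target matrix `A` along direction `u`, parameterized by `τ`. -/
noncomputable def broyd {n : ℕ} (τ : ℝ) (A G : Matrix (Fin n) (Fin n) ℝ) (u : Fin n → ℝ) :
    Matrix (Fin n) (Fin n) ℝ :=
  if u = 0 then G
  else
    let aUU : ℝ := u ⬝ᵥ A.mulVec u
    let gUU : ℝ := u ⬝ᵥ G.mulVec u
    let agaUU : ℝ := u ⬝ᵥ (A * G⁻¹ * A).mulVec u
    let ρ : ℝ := gUU / aUU
    let φ : ℝ := τ * (aUU / agaUU) / (τ * (aUU / agaUU) + (1 - τ) * ρ)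
    φ • (G - aUU⁻¹ • (A * vecMulVec u u * G + G * vecMulVec u u * A)
          + ((ρ + 1) / aUU) • (A * vecMulVec u u * A)) +
    (1 - φ) • (G - gUU⁻¹ • (G * vecMulVec u u * G) + aUU⁻¹ • (A * vecMulVec u u * A))

/-- `psdLE P Q` (i.e. `P ⪯ Q`) : the matrix `Q - P` is positive semidefinite. -/
def psdLE {n : ℕ} (P Q : Matrix (Fin n) (Fin n) ℝ) : Prop := (Q - P).PosSemidef

/-- The closeness measure ν(A, G, u). -/
noncomputable def nuMeas {n : ℕ} (A G : Matrix (Fin n) (Fin n) ℝ) (u : Fin n → ℝ) : ℝ :=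
  Real.sqrt ((u ⬝ᵥ ((G - A) * G⁻¹ * (G - A)).mulVec u) / (u ⬝ᵥ A.mulVec u))

/-- The log-det barrier V(A, G) = ln det (A⁻¹ G). -/
noncomputable def logDetBarrier {n : ℕ} (A G : Matrix (Fin n) (Fin n) ℝ) : ℝ :=
  Real.log (A⁻¹ * G).det

/-- The augmented log-det barrier ψ(G, A) = ln det (A⁻¹ G) - tr (G⁻¹ (G - A)). -/
noncomputable def psiBarrier {n : ℕ} (G A : Matrix (Fin n) (Fin n) ℝ) : ℝ :=
  Real.log (A⁻¹ * G).det - (G⁻¹ * (G - A)).trace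

section QuadraticForm

variable {ι : Type*} [Fintype ι]

theorem dotProduct_mulVec_comm_of_isHermitian {S : Matrix ι ι ℝ} (hS : S.IsHermitian)
    (x y : ι → ℝ) : x ⬝ᵥ S *ᵥ y = y ⬝ᵥ S *ᵥ x := by
  rw [dotProduct_mulVec, ← mulVec_transpose, ← conjTranspose_eq_transpose_of_trivial, hS.eq,
    dotProduct_comm]

theorem dotProduct_mul_vecMulVec_mul_mulVec (A B : Matrix ι ι ℝ) (u x : ι → ℝ) :
    x ⬝ᵥ (A * vecMulVec u u * B) *ᵥ x = (x ⬝ᵥ A *ᵥ u) * (u ⬝ᵥ B *ᵥ x) := by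
  rw [← mulVec_mulVec, ← mulVec_mulVec, vecMulVec_mulVec, op_smul_eq_smul, mulVec_smul,
    dotProduct_smul, smul_eq_mul, mul_comm]

theorem dotProduct_smul_mulVec (c : ℝ) (S : Matrix ι ι ℝ) (x : ι → ℝ) :
    x ⬝ᵥ (c • S) *ᵥ x = c * (x ⬝ᵥ S *ᵥ x) := by
  rw [smul_mulVec, dotProduct_smul, smul_eq_mul]

theorem dotProduct_mulVec_sub_smul {S : Matrix ι ι ℝ} (hS : S.IsHermitian) (x u : ι → ℝ)
    (t : ℝ) : (x - t • u) ⬝ᵥ S *ᵥ (x - t • u) =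
      x ⬝ᵥ S *ᵥ x - 2 * t * (x ⬝ᵥ S *ᵥ u) + t ^ 2 * (u ⬝ᵥ S *ᵥ u) := by
  rw [mulVec_sub, mulVec_smul, sub_dotProduct, dotProduct_sub, dotProduct_sub, smul_dotProduct,
    dotProduct_smul, dotProduct_smul, dotProduct_mulVec_comm_of_isHermitian hS u x]
  simp only [smul_dotProduct, smul_eq_mul]
  ring

theorem dotProduct_mulVec_eq_sub_proj_add {S : Matrix ι ι ℝ} (hS : S.IsHermitian) {u : ι → ℝ}
    (hu : u ⬝ᵥ S *ᵥ u ≠ 0) (x : ι → ℝ) :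
    x ⬝ᵥ S *ᵥ x = (x - ((x ⬝ᵥ S *ᵥ u) / (u ⬝ᵥ S *ᵥ u)) • u) ⬝ᵥ S *ᵥ
      (x - ((x ⬝ᵥ S *ᵥ u) / (u ⬝ᵥ S *ᵥ u)) • u) + (x ⬝ᵥ S *ᵥ u) ^ 2 / (u ⬝ᵥ S *ᵥ u) := by
  rw [dotProduct_mulVec_sub_smul hS]
  field_simp
  ring

end QuadraticForm

section QuasiNewtonUpdates

variable {ι : Type*} [Fintype ι] {A G : Matrix ι ι ℝ} {u : ι → ℝ}

/- The members `τ = 1` (DFP) and `τ = 0` (BFGS) of the Broyden family `broyd τ`. -/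
noncomputable def dfpUpdate (A G : Matrix ι ι ℝ) (u : ι → ℝ) : Matrix ι ι ℝ :=
  G - (u ⬝ᵥ A *ᵥ u)⁻¹ • (A * vecMulVec u u * G + G * vecMulVec u u * A)
    + ((u ⬝ᵥ G *ᵥ u / u ⬝ᵥ A *ᵥ u + 1) / u ⬝ᵥ A *ᵥ u) • (A * vecMulVec u u * A)

noncomputable def bfgsUpdate (A G : Matrix ι ι ℝ) (u : ι → ℝ) : Matrix ι ι ℝ :=
  G - (u ⬝ᵥ G *ᵥ u)⁻¹ • (G * vecMulVec u u * G) + (u ⬝ᵥ A *ᵥ u)⁻¹ • (A * vecMulVec u u * A)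

theorem conjTranspose_mul_vecMulVec_mul (A B : Matrix ι ι ℝ) (u : ι → ℝ) :
    (A * vecMulVec u u * B)ᴴ = Bᴴ * vecMulVec u u * Aᴴ := by
  simp [Matrix.mul_assoc]

theorem Matrix.IsHermitian.dfpUpdate (hA : A.IsHermitian) (hG : G.IsHermitian) :
    (dfpUpdate A G u).IsHermitian := by
  simp only [IsHermitian, _root_.dfpUpdate, conjTranspose_add, conjTranspose_sub,
    conjTranspose_smul, conjTranspose_mul_vecMulVec_mul, hA.eq, hG.eq, star_trivial, add_comm]

theorem Matrix.IsHermitian.bfgsUpdate (hA : A.IsHermitian) (hG : G.IsHermitian) :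
    (bfgsUpdate A G u).IsHermitian := by
  simp only [IsHermitian, _root_.bfgsUpdate, conjTranspose_add, conjTranspose_sub,
    conjTranspose_smul, conjTranspose_mul_vecMulVec_mul, hA.eq, hG.eq, star_trivial]

theorem dotProduct_dfpUpdate_mulVec (hA : A.IsHermitian) (hG : G.IsHermitian)
    (ha : u ⬝ᵥ A *ᵥ u ≠ 0) (x : ι → ℝ) :
    x ⬝ᵥ dfpUpdate A G u *ᵥ x = (x - ((x ⬝ᵥ A *ᵥ u) / (u ⬝ᵥ A *ᵥ u)) • u) ⬝ᵥ G *ᵥ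
      (x - ((x ⬝ᵥ A *ᵥ u) / (u ⬝ᵥ A *ᵥ u)) • u) + (x ⬝ᵥ A *ᵥ u) ^ 2 / (u ⬝ᵥ A *ᵥ u) := by
  simp only [dfpUpdate, add_mulVec, sub_mulVec, smul_mulVec, dotProduct_add, dotProduct_sub,
    dotProduct_smul, smul_eq_mul, dotProduct_mul_vecMulVec_mul_mulVec,
    dotProduct_mulVec_comm_of_isHermitian hA u x, dotProduct_mulVec_comm_of_isHermitian hG u x,
    dotProduct_mulVec_sub_smul hG]
  field_simp
  ring

theorem dotProduct_bfgsUpdate_mulVec (hA : A.IsHermitian) (hG : G.IsHermitian) (x : ι → ℝ) :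
    x ⬝ᵥ bfgsUpdate A G u *ᵥ x =
      x ⬝ᵥ G *ᵥ x - (x ⬝ᵥ G *ᵥ u) ^ 2 / (u ⬝ᵥ G *ᵥ u) + (x ⬝ᵥ A *ᵥ u) ^ 2 / (u ⬝ᵥ A *ᵥ u) := by
  simp only [bfgsUpdate, add_mulVec, sub_mulVec, smul_mulVec, dotProduct_add, dotProduct_sub,
    dotProduct_smul, smul_eq_mul, dotProduct_mul_vecMulVec_mul_mulVec,
    dotProduct_mulVec_comm_of_isHermitian hA u x, dotProduct_mulVec_comm_of_isHermitian hG u x]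
  ring

theorem dotProduct_bfgsUpdate_mulVec_le (hA : A.IsHermitian) (hG : G.IsHermitian)
    (ha : u ⬝ᵥ A *ᵥ u ≠ 0) (hg : 0 < u ⬝ᵥ G *ᵥ u) (x : ι → ℝ) :
    x ⬝ᵥ bfgsUpdate A G u *ᵥ x ≤ x ⬝ᵥ dfpUpdate A G u *ᵥ x := by
  have key : x ⬝ᵥ dfpUpdate A G u *ᵥ x - x ⬝ᵥ bfgsUpdate A G u *ᵥ x =
      (u ⬝ᵥ G *ᵥ u) * ((x ⬝ᵥ G *ᵥ u) / (u ⬝ᵥ G *ᵥ u) - (x ⬝ᵥ A *ᵥ u) / (u ⬝ᵥ A *ᵥ u)) ^ 2 := by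
    rw [dotProduct_dfpUpdate_mulVec hA hG ha, dotProduct_bfgsUpdate_mulVec hA hG,
      dotProduct_mulVec_sub_smul hG]
    field_simp
    ring
  exact sub_nonneg.1 (key ▸ mul_nonneg hg.le (sq_nonneg _))

end QuasiNewtonUpdates

section LoewnerOrder

variable {n : ℕ} {P Q R A G : Matrix (Fin n) (Fin n) ℝ} {u : Fin n → ℝ} {c : ℝ}

theorem psdLE_iff :
    psdLE P Q ↔ (Q - P).IsHermitian ∧ ∀ x, x ⬝ᵥ P *ᵥ x ≤ x ⬝ᵥ Q *ᵥ x := by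
  simp only [psdLE, posSemidef_iff_dotProduct_mulVec, star_trivial, sub_mulVec, dotProduct_sub,
    sub_nonneg]

theorem psdLE_of_dotProduct_mulVec_le (hP : P.IsHermitian) (hQ : Q.IsHermitian)
    (h : ∀ x, x ⬝ᵥ P *ᵥ x ≤ x ⬝ᵥ Q *ᵥ x) : psdLE P Q :=
  psdLE_iff.2 ⟨hQ.sub hP, h⟩

theorem psdLE.trans (hPQ : psdLE P Q) (hQR : psdLE Q R) : psdLE P R := by
  simpa only [psdLE, sub_add_sub_cancel] using hQR.add hPQ

theorem psdLE.posDef (hPQ : psdLE P Q) (hP : P.PosDef) : Q.PosDef := by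
  simpa only [add_sub_cancel] using hP.add_posSemidef hPQ

theorem psdLE.convexComb_right {M₁ M₂ : Matrix (Fin n) (Fin n) ℝ} {φ : ℝ} (h₁ : psdLE P M₁)
    (h₂ : psdLE P M₂) (hφ : φ ∈ Set.Icc (0 : ℝ) 1) : psdLE P (φ • M₁ + (1 - φ) • M₂) := by
  have h : φ • M₁ + (1 - φ) • M₂ - P = φ • (M₁ - P) + (1 - φ) • (M₂ - P) := by module
  simpa only [psdLE, h] using (h₁.smul hφ.1).add (h₂.smul (sub_nonneg.2 hφ.2))

theorem psdLE.convexComb_left {M₁ M₂ : Matrix (Fin n) (Fin n) ℝ} {φ : ℝ} (h₁ : psdLE M₁ Q)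
    (h₂ : psdLE M₂ Q) (hφ : φ ∈ Set.Icc (0 : ℝ) 1) : psdLE (φ • M₁ + (1 - φ) • M₂) Q := by
  have h : Q - (φ • M₁ + (1 - φ) • M₂) = φ • (Q - M₁) + (1 - φ) • (Q - M₂) := by module
  simpa only [psdLE, h] using (h₁.smul hφ.1).add (h₂.smul (sub_nonneg.2 hφ.2))

theorem smul_psdLE_dfpUpdate (hA : A.PosDef) (hG : G.IsHermitian) (hu : u ≠ 0) (hc : c ≤ 1)
    (h : psdLE (c • A) G) : psdLE (c • A) (dfpUpdate A G u) := by
  have ha : 0 < u ⬝ᵥ A *ᵥ u := by simpa using hA.dotProduct_mulVec_pos hu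
  refine psdLE_of_dotProduct_mulVec_le (hA.isHermitian.smul (.all c))
    (hA.isHermitian.dfpUpdate hG) fun x ↦ ?_
  have hy := (psdLE_iff.1 h).2 (x - ((x ⬝ᵥ A *ᵥ u) / (u ⬝ᵥ A *ᵥ u)) • u)
  have hα : 0 ≤ (x ⬝ᵥ A *ᵥ u) ^ 2 / (u ⬝ᵥ A *ᵥ u) := by positivity
  rw [dotProduct_smul_mulVec] at hy ⊢
  rw [dotProduct_dfpUpdate_mulVec hA.isHermitian hG ha.ne',
    dotProduct_mulVec_eq_sub_proj_add hA.isHermitian ha.ne' x]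
  nlinarith [mul_le_of_le_one_left hα hc]

theorem dfpUpdate_psdLE_smul (hA : A.PosDef) (hG : G.IsHermitian) (hu : u ≠ 0) (hc : 1 ≤ c)
    (h : psdLE G (c • A)) : psdLE (dfpUpdate A G u) (c • A) := by
  have ha : 0 < u ⬝ᵥ A *ᵥ u := by simpa using hA.dotProduct_mulVec_pos hu
  refine psdLE_of_dotProduct_mulVec_le (hA.isHermitian.dfpUpdate hG)
    (hA.isHermitian.smul (.all c)) fun x ↦ ?_
  have hy := (psdLE_iff.1 h).2 (x - ((x ⬝ᵥ A *ᵥ u) / (u ⬝ᵥ A *ᵥ u)) • u)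
  have hα : 0 ≤ (x ⬝ᵥ A *ᵥ u) ^ 2 / (u ⬝ᵥ A *ᵥ u) := by positivity
  rw [dotProduct_smul_mulVec] at hy ⊢
  rw [dotProduct_dfpUpdate_mulVec hA.isHermitian hG ha.ne',
    dotProduct_mulVec_eq_sub_proj_add hA.isHermitian ha.ne' x]
  nlinarith [le_mul_of_one_le_left hα hc]

theorem smul_psdLE_bfgsUpdate (hA : A.PosDef) (hG : G.PosDef) (hu : u ≠ 0) (hc₀ : 0 ≤ c)
    (hc₁ : c ≤ 1) (h : psdLE (c • A) G) : psdLE (c • A) (bfgsUpdate A G u) := by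
  have ha : 0 < u ⬝ᵥ A *ᵥ u := by simpa using hA.dotProduct_mulVec_pos hu
  have hg : 0 < u ⬝ᵥ G *ᵥ u := by simpa using hG.dotProduct_mulVec_pos hu
  refine psdLE_of_dotProduct_mulVec_le (hA.isHermitian.smul (.all c))
    (hA.isHermitian.bfgsUpdate hG.isHermitian) fun x ↦ ?_
  set t := (x ⬝ᵥ G *ᵥ u) / (u ⬝ᵥ G *ᵥ u)
  have hz := (psdLE_iff.1 h).2 (x - t • u)
  have hzA : (x - t • u) ⬝ᵥ A *ᵥ (x - t • u) = x ⬝ᵥ A *ᵥ x - (x ⬝ᵥ A *ᵥ u) ^ 2 / (u ⬝ᵥ A *ᵥ u)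
      + (t * (u ⬝ᵥ A *ᵥ u) - x ⬝ᵥ A *ᵥ u) ^ 2 / (u ⬝ᵥ A *ᵥ u) := by
    rw [dotProduct_mulVec_sub_smul hA.isHermitian]
    field_simp
    ring
  have hα : 0 ≤ (x ⬝ᵥ A *ᵥ u) ^ 2 / (u ⬝ᵥ A *ᵥ u) := by positivity
  have hβ : 0 ≤ (t * (u ⬝ᵥ A *ᵥ u) - x ⬝ᵥ A *ᵥ u) ^ 2 / (u ⬝ᵥ A *ᵥ u) := by positivity
  rw [dotProduct_smul_mulVec, hzA] at hz
  rw [dotProduct_smul_mulVec, dotProduct_bfgsUpdate_mulVec hA.isHermitian hG.isHermitian,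
    dotProduct_mulVec_eq_sub_proj_add hG.isHermitian hg.ne' x]
  nlinarith [mul_nonneg hc₀ hβ, mul_le_of_le_one_left hα hc₁]

theorem bfgsUpdate_psdLE_dfpUpdate (hA : A.PosDef) (hG : G.PosDef) (hu : u ≠ 0) :
    psdLE (bfgsUpdate A G u) (dfpUpdate A G u) := by
  have ha : 0 < u ⬝ᵥ A *ᵥ u := by simpa using hA.dotProduct_mulVec_pos hu
  have hg : 0 < u ⬝ᵥ G *ᵥ u := by simpa using hG.dotProduct_mulVec_pos hu
  exact psdLE_of_dotProduct_mulVec_le (hA.isHermitian.bfgsUpdate hG.isHermitian)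
    (hA.isHermitian.dfpUpdate hG.isHermitian)
    (dotProduct_bfgsUpdate_mulVec_le hA.isHermitian hG.isHermitian ha.ne' hg)

end LoewnerOrder

theorem div_add_mem_Icc {x y : ℝ} (hx : 0 ≤ x) (hy : 0 ≤ y) : x / (x + y) ∈ Set.Icc (0 : ℝ) 1 :=
  ⟨by positivity, div_le_one_of_le₀ (le_add_of_nonneg_right hy) (add_nonneg hx hy)⟩

theorem broyd_eq_convexComb {n : ℕ} {A G : Matrix (Fin n) (Fin n) ℝ} {u : Fin n → ℝ} {τ : ℝ}
    (hA : A.PosSemidef) (hG : G.PosSemidef) (hu : u ≠ 0) (hτ : τ ∈ Set.Icc (0 : ℝ) 1) :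
    ∃ φ ∈ Set.Icc (0 : ℝ) 1,
      broyd τ A G u = φ • dfpUpdate A G u + (1 - φ) • bfgsUpdate A G u := by
  have ha : 0 ≤ u ⬝ᵥ A *ᵥ u := by simpa using hA.dotProduct_mulVec_nonneg u
  have hg : 0 ≤ u ⬝ᵥ G *ᵥ u := by simpa using hG.dotProduct_mulVec_nonneg u
  have haga : 0 ≤ u ⬝ᵥ (A * G⁻¹ * A) *ᵥ u := by
    have := (hG.inv.conjTranspose_mul_mul_same A).dotProduct_mulVec_nonneg u
    rwa [hA.isHermitian.eq, star_trivial] at this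
  refine ⟨_, div_add_mem_Icc (x := τ * (u ⬝ᵥ A *ᵥ u / u ⬝ᵥ (A * G⁻¹ * A) *ᵥ u))
    (y := (1 - τ) * (u ⬝ᵥ G *ᵥ u / u ⬝ᵥ A *ᵥ u)) (mul_nonneg hτ.1 (by positivity))
    (mul_nonneg (sub_nonneg.2 hτ.2) (by positivity)), ?_⟩
  simp only [broyd, if_neg hu]
  rfl

theorem broyd_preserves_eig_bounds_general {n : ℕ}
    (A G : Matrix (Fin n) (Fin n) ℝ) (hA : A.PosDef) (hG : G.PosDef)
    (ξ η : ℝ) (hξ : 1 ≤ ξ) (hη : 1 ≤ η)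
    (hlow : psdLE (ξ⁻¹ • A) G) (hup : psdLE G (η • A))
    (u : Fin n → ℝ) (τ : ℝ) (hτ : τ ∈ Set.Icc (0 : ℝ) 1) :
    psdLE (ξ⁻¹ • A) (broyd τ A G u) ∧ psdLE (broyd τ A G u) (η • A) ∧
      (broyd τ A G u).PosDef := by
  obtain rfl | hu := eq_or_ne u 0
  · simpa only [broyd, if_pos] using ⟨hlow, hup, hG⟩
  have hξ₀ : 0 < ξ⁻¹ := inv_pos.2 (zero_lt_one.trans_le hξ)
  have hξ₁ : ξ⁻¹ ≤ 1 := inv_le_one_of_one_le₀ hξ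
  obtain ⟨φ, hφ, hbroyd⟩ := broyd_eq_convexComb hA.posSemidef hG.posSemidef hu hτ
  have hdfp_up := dfpUpdate_psdLE_smul hA hG.isHermitian hu hη hup
  have hbroyd_low : psdLE (ξ⁻¹ • A) (broyd τ A G u) := hbroyd ▸
    (smul_psdLE_dfpUpdate hA hG.isHermitian hu hξ₁ hlow).convexComb_right
      (smul_psdLE_bfgsUpdate hA hG hu hξ₀.le hξ₁ hlow) hφ
  have hbroyd_up : psdLE (broyd τ A G u) (η • A) := hbroyd ▸
    hdfp_up.convexComb_left ((bfgsUpdate_psdLE_dfpUpdate hA hG hu).trans hdfp_up) hφ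
  exact ⟨hbroyd_low, hbroyd_up, hbroyd_low.posDef (hA.smul hξ₀)⟩

theorem broyd_preserves_eig_bounds {n : ℕ} (hn : 1 ≤ n)
    (A G : Matrix (Fin n) (Fin n) ℝ) (hA : A.PosDef) (hG : G.PosDef)
    (ξ η : ℝ) (hξ : 1 ≤ ξ) (hη : 1 ≤ η)
    (hlow : psdLE (ξ⁻¹ • A) G) (hup : psdLE G (η • A))
    (u : Fin n → ℝ) (τ : ℝ) (hτ : τ ∈ Set.Icc (0 : ℝ) 1) :
    psdLE (ξ⁻¹ • A) (broyd τ A G u) ∧ psdLE (broyd τ A G u) (η • A) ∧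
      (broyd τ A G u).PosDef :=
  broyd_preserves_eig_bounds_general A G hA hG ξ η hξ hη hlow hup u τ hτ
end

section
/- Let A, G be symmetric positive definite n×n matrices with A ⪯ G ⪯ η·A for some η ≥ 1. Then, for any τ ∈ [0,1] and any nonzero u ∈ ℝ^n, V(A, G) − V(A, Broyd_τ(A, G, u)) ≥ ln(1 + (τ/η + 1 − τ)·ν(A,G,u)²). -/
open Matrix Finset

/-!
Write `a = ⟨Au,u⟩`, `g = ⟨Gu,u⟩`, `s = ⟨AG⁻¹Au,u⟩`, so `σ = a/s` and `ρ = g/a`. The Broyden update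
is `G` plus a rank-two term in `Au` and `Gu`; the matrix determinant lemma reduces its determinant
to a `2 × 2` one built from the Gram matrix `[[s, a], [a, g]]`, giving
`det Broyd_τ = det G / (τσ + (1 - τ)ρ)`. So the barrier drops by exactly `ln (τσ + (1 - τ)ρ)`.

Since `1 + (τ/η + 1 - τ)ν² = τ(1 + ν²/η) + (1 - τ)(1 + ν²)`, it remains to show `1 + ν² ≤ ρ` and
`1 + ν²/η ≤ σ`. With `X = G - A`, both come from the inequality `X G⁻¹ X ⪯ c X` for `0 ⪯ X ⪯ c G`
(a Cauchy–Schwarz argument), applied with `c = 1` and `c = 1 - 1/η`, together with the identity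
`ν² = ρ - 2 + 1/σ`.
-/

namespace Matrix

variable {n : Type*}

theorem PosSemidef.isSymm {X : Matrix n n ℝ} (hX : X.PosSemidef) : X.IsSymm :=
  isHermitian_iff_isSymm.mp hX.isHermitian

theorem PosDef.isSymm {X : Matrix n n ℝ} (hX : X.PosDef) : X.IsSymm :=
  hX.posSemidef.isSymm

variable [Fintype n]

theorem IsSymm.vecMul_eq_mulVec {M : Matrix n n ℝ} (hM : M.IsSymm) (x : n → ℝ) :
    x ᵥ* M = M *ᵥ x := by
  rw [← mulVec_transpose, hM.eq]

theorem IsSymm.dotProduct_mulVec_comm {M : Matrix n n ℝ} (hM : M.IsSymm) (x y : n → ℝ) :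
    x ⬝ᵥ M *ᵥ y = y ⬝ᵥ M *ᵥ x := by
  rw [dotProduct_mulVec, hM.vecMul_eq_mulVec, dotProduct_comm]

theorem IsSymm.dotProduct_mul_mul_mulVec {X : Matrix n n ℝ} (hX : X.IsSymm) (M : Matrix n n ℝ)
    (v : n → ℝ) : v ⬝ᵥ (X * M * X) *ᵥ v = (X *ᵥ v) ⬝ᵥ M *ᵥ (X *ᵥ v) := by
  rw [← mulVec_mulVec, ← mulVec_mulVec, dotProduct_mulVec v X, hX.vecMul_eq_mulVec]

theorem PosSemidef.dotProduct_mulVec_sq_le {X : Matrix n n ℝ} (hX : X.PosSemidef)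
    (x y : n → ℝ) : (x ⬝ᵥ X *ᵥ y) ^ 2 ≤ (x ⬝ᵥ X *ᵥ x) * (y ⬝ᵥ X *ᵥ y) := by
  have hquad (t : ℝ) :
      0 ≤ (y ⬝ᵥ X *ᵥ y) * (t * t) + 2 * (x ⬝ᵥ X *ᵥ y) * t + x ⬝ᵥ X *ᵥ x := by
    have h := hX.dotProduct_mulVec_nonneg (x + t • y)
    simp only [star_trivial, mulVec_add, mulVec_smul, dotProduct_add, add_dotProduct,
      dotProduct_smul, smul_dotProduct, smul_eq_mul] at h
    rw [hX.isSymm.dotProduct_mulVec_comm y x] at h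
    linarith
  have hdiscrim := discrim_le_zero hquad
  rw [discrim] at hdiscrim
  nlinarith

theorem of_two_mul_mul_transpose (x y : n → ℝ) (M : Matrix n n ℝ) :
    of ![x, y] * M * (of ![x, y])ᵀ =
      !![x ⬝ᵥ M *ᵥ x, x ⬝ᵥ M *ᵥ y; y ⬝ᵥ M *ᵥ x, y ⬝ᵥ M *ᵥ y] := by
  ext i j
  fin_cases i <;> fin_cases j <;> exact (dotProduct_mulVec _ _ _).symm

variable [DecidableEq n]

theorem sub_mul_inv_mul_sub {G : Matrix n n ℝ} (hG : IsUnit G.det) (A : Matrix n n ℝ) :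
    (G - A) * G⁻¹ * (G - A) = G - 2 • A + A * G⁻¹ * A := by
  simp only [Matrix.sub_mul, Matrix.mul_sub, nonsing_inv_mul_cancel_right _ _ hG,
    mul_nonsing_inv _ hG, Matrix.one_mul]
  abel

theorem PosDef.dotProduct_mul_inv_mul_mulVec_pos {A G : Matrix n n ℝ} (hA : A.PosDef)
    (hG : G.PosDef) {u : n → ℝ} (hu : u ≠ 0) : 0 < u ⬝ᵥ (A * G⁻¹ * A) *ᵥ u := by
  have hAu : A *ᵥ u ≠ 0 := fun h => by
    simpa [h] using hA.dotProduct_mulVec_pos hu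
  rw [hA.isSymm.dotProduct_mul_mul_mulVec]
  simpa using hG.inv.dotProduct_mulVec_pos hAu

theorem PosDef.dotProduct_mul_inv_mul_mulVec_le {G X : Matrix n n ℝ} (hG : G.PosDef)
    (hX : X.PosSemidef) {c : ℝ} (hc : 0 ≤ c) (hXG : (c • G - X).PosSemidef) (v : n → ℝ) :
    v ⬝ᵥ (X * G⁻¹ * X) *ᵥ v ≤ c * (v ⬝ᵥ X *ᵥ v) := by
  -- Cauchy–Schwarz for the form of `X` at `v` and `z = G⁻¹ X v`, for which `⟨G z, z⟩ = ⟨X v, z⟩`.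
  set z := G⁻¹ *ᵥ (X *ᵥ v)
  have hGz : G *ᵥ z = X *ᵥ v := by
    rw [mulVec_mulVec, mul_nonsing_inv _ hG.det_pos.ne'.isUnit, one_mulVec]
  have hq : v ⬝ᵥ (X * G⁻¹ * X) *ᵥ v = v ⬝ᵥ X *ᵥ z := by
    rw [← mulVec_mulVec, ← mulVec_mulVec]
  have hqG : z ⬝ᵥ G *ᵥ z = v ⬝ᵥ X *ᵥ z := by
    rw [hGz, hX.isSymm.dotProduct_mulVec_comm, dotProduct_comm]
  have hr : z ⬝ᵥ X *ᵥ z ≤ c * (v ⬝ᵥ X *ᵥ z) := by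
    have h := hXG.dotProduct_mulVec_nonneg z
    simp only [star_trivial, sub_mulVec, smul_mulVec, dotProduct_sub, dotProduct_smul,
      smul_eq_mul, hqG] at h
    linarith
  have hq0 : 0 ≤ v ⬝ᵥ X *ᵥ z := by
    simpa [hqG] using hG.posSemidef.dotProduct_mulVec_nonneg z
  have hp0 : 0 ≤ v ⬝ᵥ X *ᵥ v := by simpa using hX.dotProduct_mulVec_nonneg v
  have hcs := hX.dotProduct_mulVec_sq_le v z
  rw [hq]
  nlinarith [mul_nonneg hc hp0]

end Matrix

section BroydenScalars

variable {ι : Type*} [Fintype ι]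

noncomputable def broydRho (A G : Matrix ι ι ℝ) (u : ι → ℝ) : ℝ :=
  (u ⬝ᵥ G *ᵥ u) / (u ⬝ᵥ A *ᵥ u)

theorem broydRho_pos {A G : Matrix ι ι ℝ} {u : ι → ℝ} (hA : A.PosDef) (hG : G.PosDef)
    (hu : u ≠ 0) : 0 < broydRho A G u :=
  div_pos (by simpa using hG.dotProduct_mulVec_pos hu) (by simpa using hA.dotProduct_mulVec_pos hu)

variable [DecidableEq ι]

noncomputable def broydSigma (A G : Matrix ι ι ℝ) (u : ι → ℝ) : ℝ :=
  (u ⬝ᵥ A *ᵥ u) / (u ⬝ᵥ (A * G⁻¹ * A) *ᵥ u)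

noncomputable def broydPhi (τ : ℝ) (A G : Matrix ι ι ℝ) (u : ι → ℝ) : ℝ :=
  τ * broydSigma A G u / (τ * broydSigma A G u + (1 - τ) * broydRho A G u)

theorem broydSigma_pos {A G : Matrix ι ι ℝ} {u : ι → ℝ} (hA : A.PosDef) (hG : G.PosDef)
    (hu : u ≠ 0) : 0 < broydSigma A G u :=
  div_pos (by simpa using hA.dotProduct_mulVec_pos hu) (hA.dotProduct_mul_inv_mul_mulVec_pos hG hu)

end BroydenScalars

section BroydenUpdate

variable {n : ℕ} {A G : Matrix (Fin n) (Fin n) ℝ} {u : Fin n → ℝ}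

theorem broyd_eq_add_transpose_mul_mul (τ : ℝ) (hA : A.IsSymm) (hG : G.IsSymm) (hu : u ≠ 0) :
    broyd τ A G u = G + (of ![A *ᵥ u, G *ᵥ u])ᵀ *
      !![(broydPhi τ A G u * broydRho A G u + 1) / (u ⬝ᵥ A *ᵥ u),
          -broydPhi τ A G u / (u ⬝ᵥ A *ᵥ u);
         -broydPhi τ A G u / (u ⬝ᵥ A *ᵥ u), -(1 - broydPhi τ A G u) / (u ⬝ᵥ G *ᵥ u)] *
      of ![A *ᵥ u, G *ᵥ u] := by
  have hrankOne (M N : Matrix (Fin n) (Fin n) ℝ) (hN : N.IsSymm) :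
      M * vecMulVec u u * N = vecMulVec (M *ᵥ u) (N *ᵥ u) := by
    rw [mul_vecMulVec, vecMulVec_mul, hN.vecMul_eq_mulVec]
  simp only [broyd, if_neg hu, hrankOne _ _ hA, hrankOne _ _ hG]
  rw [← broydSigma, ← broydRho, ← broydPhi]
  ext i j
  simp only [smul_add, Matrix.add_apply, Matrix.smul_apply, Matrix.sub_apply, vecMulVec_apply,
    smul_eq_mul, mul_apply, transpose_apply, of_apply, Fin.sum_univ_two, cons_val_zero,
    cons_val_one]
  ring

theorem det_broyd (τ : ℝ) (hA : A.PosDef) (hG : G.PosDef) (hu : u ≠ 0) :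
    (broyd τ A G u).det =
      G.det * (broydPhi τ A G u / broydSigma A G u + (1 - broydPhi τ A G u) / broydRho A G u) := by
  have hGinv : G⁻¹ *ᵥ (G *ᵥ u) = u := by
    rw [mulVec_mulVec, nonsing_inv_mul _ hG.det_pos.ne'.isUnit, one_mulVec]
  have hgram : of ![A *ᵥ u, G *ᵥ u] * G⁻¹ * (of ![A *ᵥ u, G *ᵥ u])ᵀ =
      !![u ⬝ᵥ (A * G⁻¹ * A) *ᵥ u, u ⬝ᵥ A *ᵥ u; u ⬝ᵥ A *ᵥ u, u ⬝ᵥ G *ᵥ u] := by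
    have hcross : (A *ᵥ u) ⬝ᵥ G⁻¹ *ᵥ (G *ᵥ u) = u ⬝ᵥ A *ᵥ u := by
      rw [hGinv, dotProduct_comm]
    rw [of_two_mul_mul_transpose, hG.inv.isSymm.dotProduct_mulVec_comm (G *ᵥ u), hcross, hGinv,
      dotProduct_comm (G *ᵥ u), hA.isSymm.dotProduct_mul_mul_mulVec]
  have ha : 0 < u ⬝ᵥ A *ᵥ u := by simpa using hA.dotProduct_mulVec_pos hu
  have hg : 0 < u ⬝ᵥ G *ᵥ u := by simpa using hG.dotProduct_mulVec_pos hu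
  have hs := hA.dotProduct_mul_inv_mul_mulVec_pos hG hu
  rw [broyd_eq_add_transpose_mul_mul τ hA.isSymm hG.isSymm hu,
    det_add_mul _ _ hG.det_pos.ne'.isUnit, ← Matrix.mul_assoc, hgram]
  congr 1
  rw [one_fin_two, mul_fin_two, of_add_of]
  simp only [cons_add_cons, empty_add_empty, det_fin_two_of, broydSigma, broydRho]
  field_simp
  ring

theorem logDetBarrier_sub_broyd {τ : ℝ} (hA : A.PosDef) (hG : G.PosDef) (hτ : τ ∈ Set.Icc 0 1)
    (hu : u ≠ 0) :
    logDetBarrier A G - logDetBarrier A (broyd τ A G u) =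
      Real.log (τ * broydSigma A G u + (1 - τ) * broydRho A G u) := by
  have hσ := broydSigma_pos hA hG hu
  have hρ := broydRho_pos hA hG hu
  have hd : 0 < τ * broydSigma A G u + (1 - τ) * broydRho A G u := by
    rcases hτ.1.eq_or_lt with rfl | hτ0
    · simpa using hρ
    · nlinarith [hτ.2]
  have hdet : (broyd τ A G u).det =
      G.det / (τ * broydSigma A G u + (1 - τ) * broydRho A G u) := by
    rw [det_broyd τ hA hG hu, broydPhi]
    field_simp
    ring
  have hAG : (A⁻¹).det * G.det ≠ 0 := (mul_pos hA.inv.det_pos hG.det_pos).ne'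
  rw [logDetBarrier, logDetBarrier, det_mul, det_mul, hdet, ← mul_div_assoc,
    Real.log_div hAG hd.ne']
  ring

theorem nuMeas_sq_eq_div (hA : A.PosDef) (hG : G.PosDef) :
    nuMeas A G u ^ 2 = u ⬝ᵥ ((G - A) * G⁻¹ * (G - A)) *ᵥ u / u ⬝ᵥ A *ᵥ u := by
  rw [nuMeas, Real.sq_sqrt]
  apply div_nonneg
  · rw [(hG.isSymm.sub hA.isSymm).dotProduct_mul_mul_mulVec]
    simpa using hG.inv.posSemidef.dotProduct_mulVec_nonneg ((G - A) *ᵥ u)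
  · simpa using hA.posSemidef.dotProduct_mulVec_nonneg u

theorem nuMeas_sq_eq_broydRho_sub_two_add_inv (hA : A.PosDef) (hG : G.PosDef) (hu : u ≠ 0) :
    nuMeas A G u ^ 2 = broydRho A G u - 2 + (broydSigma A G u)⁻¹ := by
  have ha : 0 < u ⬝ᵥ A *ᵥ u := by simpa using hA.dotProduct_mulVec_pos hu
  have hs := hA.dotProduct_mul_inv_mul_mulVec_pos hG hu
  rw [nuMeas_sq_eq_div hA hG, sub_mul_inv_mul_sub hG.det_pos.ne'.isUnit, broydRho, broydSigma]
  simp only [add_mulVec, sub_mulVec, smul_mulVec, dotProduct_add, dotProduct_sub,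
    dotProduct_smul]
  field_simp
  ring

theorem nuMeas_sq_le_mul_broydRho_sub_one (hA : A.PosDef) (hG : G.PosDef) (hlow : psdLE A G)
    {c : ℝ} (hc : 0 ≤ c) (hcG : psdLE (G - A) (c • G)) (hu : u ≠ 0) :
    nuMeas A G u ^ 2 ≤ c * (broydRho A G u - 1) := by
  have ha : 0 < u ⬝ᵥ A *ᵥ u := by simpa using hA.dotProduct_mulVec_pos hu
  have h := hG.dotProduct_mul_inv_mul_mulVec_le hlow hc hcG u
  rw [sub_mulVec, dotProduct_sub] at h
  have hρ : c * (broydRho A G u - 1) * (u ⬝ᵥ A *ᵥ u) = c * (u ⬝ᵥ G *ᵥ u - u ⬝ᵥ A *ᵥ u) := by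
    rw [broydRho]
    field_simp
  rw [nuMeas_sq_eq_div hA hG, div_le_iff₀ ha, hρ]
  exact h

theorem one_add_nuMeas_sq_le_broydRho (hA : A.PosDef) (hG : G.PosDef) (hlow : psdLE A G)
    (hu : u ≠ 0) : 1 + nuMeas A G u ^ 2 ≤ broydRho A G u := by
  have hcG : psdLE (G - A) ((1 : ℝ) • G) := by
    simpa [psdLE] using hA.posSemidef
  have h := nuMeas_sq_le_mul_broydRho_sub_one hA hG hlow zero_le_one hcG hu
  linarith

theorem one_add_nuMeas_sq_div_le_broydSigma (hA : A.PosDef) (hG : G.PosDef)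
    (hlow : psdLE A G) {η : ℝ} (hη : 1 ≤ η) (hup : psdLE G (η • A)) (hu : u ≠ 0) :
    1 + nuMeas A G u ^ 2 / η ≤ broydSigma A G u := by
  have hη0 : 0 < η := zero_lt_one.trans_le hη
  have hcG : psdLE (G - A) ((1 - η⁻¹) • G) := by
    have h : (1 - η⁻¹) • G - (G - A) = η⁻¹ • (η • A - G) := by
      rw [smul_sub, smul_smul, inv_mul_cancel₀ hη0.ne', one_smul, sub_smul, one_smul]
      abel
    rw [psdLE, h]
    exact hup.smul (inv_nonneg.2 hη0.le)
  have hc : 0 ≤ 1 - η⁻¹ := sub_nonneg.2 (inv_le_one_of_one_le₀ hη)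
  have h := nuMeas_sq_le_mul_broydRho_sub_one hA hG hlow hc hcG hu
  have hρ := one_add_nuMeas_sq_le_broydRho hA hG hlow hu
  have hσ := broydSigma_pos hA hG hu
  rw [nuMeas_sq_eq_broydRho_sub_two_add_inv hA hG hu] at h hρ ⊢
  set σ := broydSigma A G u
  set ρ := broydRho A G u
  calc 1 + (ρ - 2 + σ⁻¹) / η = 1 + (ρ - 2 + σ⁻¹) * η⁻¹ := by rw [div_eq_mul_inv]
    _ ≤ 1 + (1 - η⁻¹) * (1 - σ⁻¹) := by linear_combination h
    _ ≤ 1 + (1 - σ⁻¹) := by nlinarith [inv_nonneg.2 hη0.le]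
    -- `σ + σ⁻¹ ≥ 2`
    _ ≤ σ := by nlinarith [mul_inv_cancel₀ hσ.ne', sq_nonneg (σ - 1), inv_pos.2 hσ]

end BroydenUpdate

theorem logdet_barrier_progress_general {n : ℕ}
    (A G : Matrix (Fin n) (Fin n) ℝ) (hA : A.PosDef) (hG : G.PosDef)
    (η : ℝ) (hη : 1 ≤ η)
    (hlow : psdLE A G) (hup : psdLE G (η • A))
    (τ : ℝ) (hτ : τ ∈ Set.Icc (0 : ℝ) 1) (u : Fin n → ℝ) (hu : u ≠ 0) :
    logDetBarrier A G - logDetBarrier A (broyd τ A G u) ≥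
      Real.log (1 + (τ / η + 1 - τ) * nuMeas A G u ^ 2) := by
  have hρ := one_add_nuMeas_sq_le_broydRho hA hG hlow hu
  have hσ := one_add_nuMeas_sq_div_le_broydSigma hA hG hlow hη hup hu
  have hsplit : 1 + (τ / η + 1 - τ) * nuMeas A G u ^ 2 =
      τ * (1 + nuMeas A G u ^ 2 / η) + (1 - τ) * (1 + nuMeas A G u ^ 2) := by
    ring
  have hweight : 0 ≤ τ / η + 1 - τ := by
    have := div_nonneg hτ.1 (zero_le_one.trans hη)
    linarith [hτ.2]
  rw [logDetBarrier_sub_broyd hA hG hτ hu, ge_iff_le]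
  refine Real.log_le_log (add_pos_of_pos_of_nonneg one_pos (mul_nonneg hweight (sq_nonneg _)))
    ?_
  rw [hsplit]
  exact add_le_add (mul_le_mul_of_nonneg_left hσ hτ.1)
    (mul_le_mul_of_nonneg_left hρ (sub_nonneg.2 hτ.2))

theorem logdet_barrier_progress {n : ℕ} (hn : 1 ≤ n)
    (A G : Matrix (Fin n) (Fin n) ℝ) (hA : A.PosDef) (hG : G.PosDef)
    (η : ℝ) (hη : 1 ≤ η)
    (hlow : psdLE A G) (hup : psdLE G (η • A))
    (τ : ℝ) (hτ : τ ∈ Set.Icc (0 : ℝ) 1) (u : Fin n → ℝ) (hu : u ≠ 0) :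
    logDetBarrier A G - logDetBarrier A (broyd τ A G u) ≥
      Real.log (1 + (τ / η + 1 - τ) * nuMeas A G u ^ 2) :=
  logdet_barrier_progress_general A G hA hG η hη hlow hup τ hτ u hu
end

section
/- Let f : ℝ^n → ℝ be twice continuously differentiable with positive definite Hessian everywhere, and M-strongly self-concordant. Then for any x, y ∈ ℝ^n, with J := ∫₀¹ ∇²f(x + t(y − x)) dt and r := ‖y − x‖_x, one has (1 + Mr/2)⁻¹·∇²f(x) ⪯ J ⪯ (1 + Mr/2)·∇²f(x) and (1 + Mr/2)⁻¹·∇²f(y) ⪯ J ⪯ (1 + Mr/2)·∇²f(y). -/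
/-!
Along the segment `xₜ = x + t(y - x)`, strong self-concordance with the local norm taken at `x`
gives `∇²f(xₜ) ⪯ (1 + Mrt) ∇²f(x)` and `∇²f(x) ⪯ (1 + Mrt) ∇²f(xₜ)`. Integrating the first over
`t ∈ [0, 1]` gives the upper bound. The second gives `∇²f(xₜ) ⪰ (1 + Mrt)⁻¹ ∇²f(x)`, and the convex
function `t ↦ (1 + Mrt)⁻¹` lies above its tangent at `t = 1/2`, whose integral is `(1 + Mr/2)⁻¹`.
The bounds at `y` are those at `x` for the reversed segment, since `‖x - y‖_x = r`.
-/

open Matrix Finset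

/-- The Hessian matrix of `f` at `x` (second derivative in coordinate directions). -/
noncomputable def hessF {n : ℕ} (f : (Fin n → ℝ) → ℝ) (x : Fin n → ℝ) :
    Matrix (Fin n) (Fin n) ℝ :=
  Matrix.of fun i j => fderiv ℝ (fderiv ℝ f) x (Pi.single i 1) (Pi.single j 1)

/-- The gradient of `f` at `x`. -/
noncomputable def gradF {n : ℕ} (f : (Fin n → ℝ) → ℝ) (x : Fin n → ℝ) : Fin n → ℝ :=
  fun i => fderiv ℝ f x (Pi.single i 1)

/-- `f` is `M`-strongly self-concordant:
`∇²f(y) − ∇²f(x) ⪯ M‖y−x‖_z ∇²f(w)` for all `x, y, z, w`. -/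
def StronglySelfConcordant {n : ℕ} (f : (Fin n → ℝ) → ℝ) (M : ℝ) : Prop :=
  ∀ x y z w : Fin n → ℝ,
    psdLE (hessF f y - hessF f x)
      ((M * Real.sqrt ((y - x) ⬝ᵥ (hessF f z).mulVec (y - x))) • hessF f w)

open MeasureTheory

theorem intervalIntegral_affine (a b : ℝ) : ∫ t in (0:ℝ)..1, (a + b * t) = a + b / 2 := by
  rw [intervalIntegral.integral_add intervalIntegrable_const
    ((continuous_const_mul b).intervalIntegrable 0 1), intervalIntegral.integral_const,
    intervalIntegral.integral_const_mul, integral_id]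
  ring

/-- Tangent-line bound for the convex function `b ↦ b⁻¹` at `a`. -/
theorem inv_sub_div_sq_le_inv {a b : ℝ} (ha : 0 < a) (hb : 0 < b) :
    a⁻¹ - (b - a) / a ^ 2 ≤ b⁻¹ := by
  have key : b * (2 * a - b) ≤ a ^ 2 := by nlinarith [sq_nonneg (a - b)]
  calc a⁻¹ - (b - a) / a ^ 2 = b * (2 * a - b) / a ^ 2 * b⁻¹ := by field_simp; ring
    _ ≤ a ^ 2 / a ^ 2 * b⁻¹ := by gcongr
    _ = b⁻¹ := by rw [div_self (by positivity), one_mul]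

theorem intervalIntegral_le_of_le_one_add_mul {p : ℝ → ℝ} {κ q : ℝ}
    (hp : IntervalIntegrable p volume 0 1)
    (h : ∀ t ∈ Set.Icc (0:ℝ) 1, p t ≤ (1 + κ * t) * q) :
    ∫ t in (0:ℝ)..1, p t ≤ (1 + κ / 2) * q :=
  calc ∫ t in (0:ℝ)..1, p t ≤ ∫ t in (0:ℝ)..1, (q + κ * q * t) :=
        intervalIntegral.integral_mono_on zero_le_one hp
          ((by fun_prop : Continuous _).intervalIntegrable 0 1) fun t ht => by linarith [h t ht]
    _ = (1 + κ / 2) * q := by rw [intervalIntegral_affine]; ring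

theorem le_intervalIntegral_of_le_one_add_mul {p : ℝ → ℝ} {κ q : ℝ} (hκ : 0 ≤ κ) (hq : 0 ≤ q)
    (hp : IntervalIntegrable p volume 0 1)
    (h : ∀ t ∈ Set.Icc (0:ℝ) 1, q ≤ (1 + κ * t) * p t) :
    (1 + κ / 2)⁻¹ * q ≤ ∫ t in (0:ℝ)..1, p t := by
  set a := 1 + κ / 2
  have ha : 0 < a := by positivity
  have tangent : ∀ t ∈ Set.Icc (0:ℝ) 1,
      (a⁻¹ + κ / 2 / a ^ 2) * q + (-(κ / a ^ 2) * q) * t ≤ p t := by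
    intro t ht
    have hb : 0 < 1 + κ * t := add_pos_of_pos_of_nonneg one_pos (mul_nonneg hκ ht.1)
    calc (a⁻¹ + κ / 2 / a ^ 2) * q + (-(κ / a ^ 2) * q) * t
        = (a⁻¹ - (1 + κ * t - a) / a ^ 2) * q := by ring
      _ ≤ (1 + κ * t)⁻¹ * q := by gcongr; exact inv_sub_div_sq_le_inv ha hb
      _ ≤ p t := by rw [inv_mul_le_iff₀ hb]; exact h t ht
  calc a⁻¹ * q = ∫ t in (0:ℝ)..1, ((a⁻¹ + κ / 2 / a ^ 2) * q + (-(κ / a ^ 2) * q) * t) := by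
        rw [intervalIntegral_affine]; ring
    _ ≤ ∫ t in (0:ℝ)..1, p t :=
        intervalIntegral.integral_mono_on zero_le_one
          ((by fun_prop : Continuous _).intervalIntegrable 0 1) hp tangent

theorem psdLE_of_dotProduct_mulVec_le_s8 {n : ℕ} {A B : Matrix (Fin n) (Fin n) ℝ}
    (hA : A.IsHermitian) (hB : B.IsHermitian) (h : ∀ v, v ⬝ᵥ A *ᵥ v ≤ v ⬝ᵥ B *ᵥ v) :
    psdLE A B :=
  .of_dotProduct_mulVec_nonneg (hB.sub hA) fun v => by
    simpa [sub_mulVec, dotProduct_sub] using h v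

theorem psdLE.dotProduct_mulVec_le {n : ℕ} {A B : Matrix (Fin n) (Fin n) ℝ} (h : psdLE A B)
    (v : Fin n → ℝ) : v ⬝ᵥ A *ᵥ v ≤ v ⬝ᵥ B *ᵥ v := by
  simpa [sub_mulVec, dotProduct_sub] using h.dotProduct_mulVec_nonneg v

section IntervalIntegralMatrix

variable {ι : Type*} {g : ℝ → Matrix ι ι ℝ} {a b : ℝ}

theorem dotProduct_mulVec_of_intervalIntegral [Fintype ι]
    (hg : ∀ i j, IntervalIntegrable (fun t => g t i j) volume a b) (v : ι → ℝ) :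
    v ⬝ᵥ (Matrix.of fun i j => ∫ t in a..b, g t i j) *ᵥ v = ∫ t in a..b, v ⬝ᵥ g t *ᵥ v := by
  have hentry : ∀ i j, IntervalIntegrable (fun t => g t i j * v j) volume a b :=
    fun i j => (hg i j).mul_const (v j)
  have hrow : ∀ i, IntervalIntegrable (fun t => v i * ∑ j, g t i j * v j) volume a b :=
    fun i => by simpa only [Finset.sum_apply] using (IntervalIntegrable.sum Finset.univ fun j _ =>
      hentry i j).const_mul (v i)
  simp only [dotProduct, mulVec, of_apply]
  rw [intervalIntegral.integral_finsetSum fun i _ => hrow i]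
  refine Finset.sum_congr rfl fun i _ => ?_
  rw [intervalIntegral.integral_const_mul, intervalIntegral.integral_finsetSum fun j _ =>
    hentry i j]
  simp only [intervalIntegral.integral_mul_const]

theorem isHermitian_of_intervalIntegral (hg : ∀ t, (g t).IsHermitian) :
    (Matrix.of fun i j => ∫ t in a..b, g t i j).IsHermitian :=
  IsHermitian.ext fun i j => by
    simp only [of_apply, star_trivial]
    exact intervalIntegral.integral_congr fun t _ => by simpa using (hg t).apply i j

end IntervalIntegralMatrix

section Hessian

variable {n : ℕ} {f : (Fin n → ℝ) → ℝ} {M : ℝ}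

noncomputable def hessAvg (f : (Fin n → ℝ) → ℝ) (x y : Fin n → ℝ) : Matrix (Fin n) (Fin n) ℝ :=
  Matrix.of fun i j => ∫ t in (0:ℝ)..1, hessF f (x + t • (y - x)) i j

/-- The local norm `‖h‖_z`. -/
noncomputable def localNorm (f : (Fin n → ℝ) → ℝ) (z h : Fin n → ℝ) : ℝ :=
  Real.sqrt (h ⬝ᵥ hessF f z *ᵥ h)

theorem localNorm_smul (z h : Fin n → ℝ) (s : ℝ) :
    localNorm f z (s • h) = |s| * localNorm f z h := by
  rw [localNorm, localNorm, mulVec_smul, dotProduct_smul, smul_dotProduct, smul_eq_mul,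
    smul_eq_mul, ← mul_assoc, ← sq, Real.sqrt_mul (sq_nonneg s), Real.sqrt_sq_eq_abs]

theorem localNorm_sub_comm (z x y : Fin n → ℝ) : localNorm f z (x - y) = localNorm f z (y - x) := by
  rw [← neg_sub, ← neg_one_smul ℝ (y - x), localNorm_smul, abs_neg, abs_one, one_mul]

theorem StronglySelfConcordant.dotProduct_mulVec_sub_le (hssc : StronglySelfConcordant f M)
    (a b z w v : Fin n → ℝ) :
    v ⬝ᵥ hessF f b *ᵥ v - v ⬝ᵥ hessF f a *ᵥ v ≤
      M * localNorm f z (b - a) * (v ⬝ᵥ hessF f w *ᵥ v) := by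
  simpa [sub_mulVec, dotProduct_sub, smul_mulVec, localNorm] using
    (hssc a b z w).dotProduct_mulVec_le v

theorem continuous_hessF (hf : ContDiff ℝ 2 f) : Continuous (hessF f) := by
  have h : Continuous (fderiv ℝ (fderiv ℝ f)) :=
    (hf.fderiv_right (m := 1) le_rfl).continuous_fderiv one_ne_zero
  exact continuous_pi fun i => continuous_pi fun j =>
    (h.clm_apply continuous_const).clm_apply continuous_const

theorem hessAvg_comm (x y : Fin n → ℝ) : hessAvg f x y = hessAvg f y x := by
  ext i j
  have reverse := intervalIntegral.integral_comp_sub_left (a := 0) (b := 1)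
    (fun t => hessF f (x + t • (y - x)) i j) 1
  rw [sub_self, sub_zero] at reverse
  rw [hessAvg, hessAvg, of_apply, of_apply, ← reverse]
  refine intervalIntegral.integral_congr fun t _ => ?_
  rw [show x + (1 - t) • (y - x) = y + t • (x - y) by module]

theorem continuous_hessF_segment (hf : ContDiff ℝ 2 f) (x y : Fin n → ℝ) :
    Continuous fun t : ℝ => hessF f (x + t • (y - x)) :=
  (continuous_hessF hf).comp (by fun_prop)

theorem intervalIntegrable_dotProduct_mulVec_hessF_segment (hf : ContDiff ℝ 2 f)
    (x y v : Fin n → ℝ) :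
    IntervalIntegrable (fun t => v ⬝ᵥ hessF f (x + t • (y - x)) *ᵥ v) volume 0 1 :=
  (continuous_const.dotProduct ((continuous_hessF_segment hf x y).matrix_mulVec
    continuous_const)).intervalIntegrable 0 1

theorem dotProduct_mulVec_hessAvg (hf : ContDiff ℝ 2 f) (x y v : Fin n → ℝ) :
    v ⬝ᵥ hessAvg f x y *ᵥ v = ∫ t in (0:ℝ)..1, v ⬝ᵥ hessF f (x + t • (y - x)) *ᵥ v :=
  dotProduct_mulVec_of_intervalIntegral
    (fun i j => ((continuous_hessF_segment hf x y).matrix_elem i j).intervalIntegrable 0 1) v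

theorem isHermitian_hessAvg (hpos : ∀ x, (hessF f x).PosDef) (x y : Fin n → ℝ) :
    (hessAvg f x y).IsHermitian :=
  isHermitian_of_intervalIntegral fun _ => (hpos _).isHermitian

theorem hessAvg_le (hf : ContDiff ℝ 2 f) (hpos : ∀ x, (hessF f x).PosDef)
    (hssc : StronglySelfConcordant f M) (x y z : Fin n → ℝ) :
    psdLE (hessAvg f x y) ((1 + M * localNorm f z (y - x) / 2) • hessF f x) := by
  refine psdLE_of_dotProduct_mulVec_le_s8 (isHermitian_hessAvg hpos x y)
    ((hpos x).isHermitian.smul (IsSelfAdjoint.all _)) fun v => ?_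
  rw [dotProduct_mulVec_hessAvg hf, smul_mulVec, dotProduct_smul, smul_eq_mul]
  refine intervalIntegral_le_of_le_one_add_mul
    (intervalIntegrable_dotProduct_mulVec_hessF_segment hf x y v) fun t ht => ?_
  have h := hssc.dotProduct_mulVec_sub_le x (x + t • (y - x)) z x v
  rw [add_sub_cancel_left, localNorm_smul, abs_of_nonneg ht.1] at h
  linear_combination h

theorem inv_smul_le_hessAvg (hf : ContDiff ℝ 2 f) (hpos : ∀ x, (hessF f x).PosDef) (hM : 0 ≤ M)
    (hssc : StronglySelfConcordant f M) (x y z : Fin n → ℝ) :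
    psdLE ((1 + M * localNorm f z (y - x) / 2)⁻¹ • hessF f x) (hessAvg f x y) := by
  refine psdLE_of_dotProduct_mulVec_le_s8 ((hpos x).isHermitian.smul (IsSelfAdjoint.all _))
    (isHermitian_hessAvg hpos x y) fun v => ?_
  rw [dotProduct_mulVec_hessAvg hf, smul_mulVec, dotProduct_smul, smul_eq_mul]
  have hq : 0 ≤ v ⬝ᵥ hessF f x *ᵥ v := by
    simpa using (hpos x).posSemidef.dotProduct_mulVec_nonneg v
  refine le_intervalIntegral_of_le_one_add_mul (mul_nonneg hM (Real.sqrt_nonneg _)) hq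
    (intervalIntegrable_dotProduct_mulVec_hessF_segment hf x y v) fun t ht => ?_
  have h := hssc.dotProduct_mulVec_sub_le (x + t • (y - x)) x z (x + t • (y - x)) v
  rw [sub_add_cancel_left, ← neg_smul, localNorm_smul, abs_neg, abs_of_nonneg ht.1] at h
  linear_combination h

end Hessian

theorem integral_hessian_bounds_general {n : ℕ}
    (f : (Fin n → ℝ) → ℝ) (hf : ContDiff ℝ 2 f)
    (hpos : ∀ x, (hessF f x).PosDef)
    (M : ℝ) (hM : 0 ≤ M) (hssc : StronglySelfConcordant f M)
    (x y : Fin n → ℝ)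
    (J : Matrix (Fin n) (Fin n) ℝ)
    (hJ : J = Matrix.of fun i j => ∫ t in (0:ℝ)..1, hessF f (x + t • (y - x)) i j)
    (r : ℝ) (hr : r = Real.sqrt ((y - x) ⬝ᵥ (hessF f x).mulVec (y - x))) :
    psdLE ((1 + M * r / 2)⁻¹ • hessF f x) J ∧ psdLE J ((1 + M * r / 2) • hessF f x) ∧
    psdLE ((1 + M * r / 2)⁻¹ • hessF f y) J ∧ psdLE J ((1 + M * r / 2) • hessF f y) := by
  have hJ : J = hessAvg f x y := hJ
  have hr : r = localNorm f x (y - x) := hr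
  have hr' : r = localNorm f x (x - y) := hr.trans (localNorm_sub_comm x x y).symm
  refine ⟨?_, ?_, ?_, ?_⟩
  · rw [hJ, hr]; exact inv_smul_le_hessAvg hf hpos hM hssc x y x
  · rw [hJ, hr]; exact hessAvg_le hf hpos hssc x y x
  · rw [hJ, hessAvg_comm, hr']; exact inv_smul_le_hessAvg hf hpos hM hssc y x x
  · rw [hJ, hessAvg_comm, hr']; exact hessAvg_le hf hpos hssc y x x

theorem integral_hessian_bounds {n : ℕ} (hn : 1 ≤ n)
    (f : (Fin n → ℝ) → ℝ) (hf : ContDiff ℝ 2 f)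
    (hpos : ∀ x, (hessF f x).PosDef)
    (M : ℝ) (hM : 0 ≤ M) (hssc : StronglySelfConcordant f M)
    (x y : Fin n → ℝ)
    (J : Matrix (Fin n) (Fin n) ℝ)
    (hJ : J = Matrix.of fun i j => ∫ t in (0:ℝ)..1, hessF f (x + t • (y - x)) i j)
    (r : ℝ) (hr : r = Real.sqrt ((y - x) ⬝ᵥ (hessF f x).mulVec (y - x))) :
    psdLE ((1 + M * r / 2)⁻¹ • hessF f x) J ∧ psdLE J ((1 + M * r / 2) • hessF f x) ∧
    psdLE ((1 + M * r / 2)⁻¹ • hessF f y) J ∧ psdLE J ((1 + M * r / 2) • hessF f y) :=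
  integral_hessian_bounds_general f hf hpos M hM hssc x y J hJ r hr
end
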